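/- arXiv:2505.11877 — 2 statements merged into one kernel-verified Lean document; each statement's English description precedes it below -/
import Mathlib

section
/- Let f_h and f_l be likelihood-ratio experiments on [a_h,b_h] and [a_l,b_l] with 0 ≤ a_h < a_l < b_l < b_h ≤ ∞ satisfying, for each state s ∈ {0,1} and ℓ ∈ (a_l,b_l), f_{l,s}(ℓ)/F_{l,s}(ℓ) > f_{h,s}(ℓ)/F_{h,s}(ℓ) and f_{l,s}(ℓ)/(1−F_{l,s}(ℓ)) > f_{h,s}(ℓ)/(1−F_{h,s}(ℓ)). Fix μ ∈ [1/2,1) and p ∈ (0,1), let H_{t,s}(β) = F_{t,s}((1−μ)β/(μ(1−β))), and let β†_0, β†_1 be the unique crossing beliefs in (β̲_l, β̄_l) at which H_{h,s} = H_{l,s} for s = 0,1. If β†_1 < β†_0, then there exists a unique β ∈ (β†_1, β†_0) satisfying the indifference equation β·[ (1−H_{h,1}(β))/(p(1−H_{h,1}(β))+(1−p)(1−H_{l,1}(β))) − H_{h,1}(β)/(pH_{h,1}(β)+(1−p)H_{l,1}(β)) ] = (1−β)·[ H_{h,0}(β)/(pH_{h,0}(β)+(1−p)H_{l,0}(β))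 − (1−H_{h,0}(β))/(p(1−H_{h,0}(β))+(1−p)(1−H_{l,0}(β))) ]. -/
open MeasureTheory Set

/-- State-0 CDF of a likelihood-ratio experiment. -/
noncomputable def F0 (f : ℝ → ℝ) (ℓ : ℝ) : ℝ := ∫ u in (0:ℝ)..ℓ, f u

/-- State-1 CDF of a likelihood-ratio experiment. -/
noncomputable def F1 (f : ℝ → ℝ) (ℓ : ℝ) : ℝ := ∫ u in (0:ℝ)..ℓ, u * f u

/-- State-`s` CDF, `s ∈ {0,1}`. -/
noncomputable def Fs (f : ℝ → ℝ) (s : Fin 2) (ℓ : ℝ) : ℝ :=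
  if s = 0 then F0 f ℓ else F1 f ℓ

/-- State-`s` density, `s ∈ {0,1}`: `f` in state 0 and `ℓ·f(ℓ)` in state 1. -/
noncomputable def fs (f : ℝ → ℝ) (s : Fin 2) (ℓ : ℝ) : ℝ :=
  if s = 0 then f ℓ else ℓ * f ℓ

/-- A likelihood-ratio experiment on `[a, b]` with `0 ≤ a < b ≤ ∞`. -/
structure IsLRExperiment (f : ℝ → ℝ) (a : ℝ) (b : EReal) : Prop where
  a_nonneg : 0 ≤ a
  a_lt_b : (a : EReal) < b
  cont : Continuous f
  pos : ∀ ℓ : ℝ, a < ℓ → (ℓ : EReal) < b → 0 < f ℓ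
  zero_outside : ∀ ℓ : ℝ, (ℓ < a ∨ b < (ℓ : EReal)) → f ℓ = 0
  int_one : (∫ ℓ in Ioi (0:ℝ), f ℓ) = 1
  int_mean : (∫ ℓ in Ioi (0:ℝ), ℓ * f ℓ) = 1

/-- The low type's experiment is noisier: reverse-hazard-rate and hazard-rate dominance
in each state on the interior of the low type's support. -/
def Noisier (fh fl : ℝ → ℝ) (a_l b_l : ℝ) : Prop :=
  ∀ s : Fin 2, ∀ ℓ : ℝ, a_l < ℓ → ℓ < b_l →
    fs fl s ℓ / Fs fl s ℓ > fs fh s ℓ / Fs fh s ℓ ∧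
    fs fl s ℓ / (1 - Fs fl s ℓ) > fs fh s ℓ / (1 - Fs fh s ℓ)

/-- Likelihood-ratio cutoff corresponding to belief `β` under prior `μ`. -/
noncomputable def zOf (μ β : ℝ) : ℝ := (1 - μ) * β / (μ * (1 - β))

/-- Distribution of the posterior state belief conditional on state `s`. -/
noncomputable def H (f : ℝ → ℝ) (μ : ℝ) (s : Fin 2) (β : ℝ) : ℝ :=
  Fs f s (zOf μ β)

/-- Posterior belief induced by likelihood ratio `x` under prior `μ`. -/
noncomputable def betaOf (μ x : ℝ) : ℝ := μ * x / (μ * x + 1 - μ)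

/-- `βd` is the crossing belief in state `s`: it lies in `(β̲_l, β̄_l)` and
`H_{h,s} − H_{l,s}` is positive below it, zero at it, and negative above it on the high
type's belief range (expressed via `betaOf μ a_h < β`, `β < 1`, `z(β) < b_h`). -/
def IsCrossingBelief (fh fl : ℝ → ℝ) (a_h a_l b_l : ℝ) (b_h : EReal)
    (μ : ℝ) (s : Fin 2) (βd : ℝ) : Prop :=
  βd ∈ Set.Ioo (betaOf μ a_l) (betaOf μ b_l) ∧
  ∀ β : ℝ, betaOf μ a_h < β → β < 1 → ((zOf μ β : ℝ) : EReal) < b_h →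
    ((β < βd → H fh μ s β - H fl μ s β > 0) ∧
     (β = βd → H fh μ s β - H fl μ s β = 0) ∧
     (βd < β → H fh μ s β - H fl μ s β < 0))

/-- Left side of the indifference equation: the sender's expected reputational gain from
report 1 over report 0, at state belief `β`, when the market conjectures the `β`-cutoff
strategy profile. -/
noncomputable def indiffLHS (fh fl : ℝ → ℝ) (μ p β : ℝ) : ℝ :=
  β * ((1 - H fh μ 1 β) / (p * (1 - H fh μ 1 β) + (1 - p) * (1 - H fl μ 1 β))
      - H fh μ 1 β / (p * H fh μ 1 β + (1 - p) * H fl μ 1 β))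

/-- Right side of the indifference equation. -/
noncomputable def indiffRHS (fh fl : ℝ → ℝ) (μ p β : ℝ) : ℝ :=
  (1 - β) * (H fh μ 0 β / (p * H fh μ 0 β + (1 - p) * H fl μ 0 β)
      - (1 - H fh μ 0 β) / (p * (1 - H fh μ 0 β) + (1 - p) * (1 - H fl μ 0 β)))

/-!
Both reputational gains are functions of the likelihood ratios `H_{l,s}/H_{h,s}` and
`(1 - H_{l,s})/(1 - H_{h,s})`. The hazard-rate conditions make the first ratio increase and the
second decrease in the cutoff, so in each state the gain of report 1 over report 0,
`repGap s`, is strictly increasing on `(β̲_l, β̄_l)`; it vanishes at the crossing belief `β†_s`,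
where the two types are indistinguishable. Hence on `[β†_1, β†_0]` the difference of the two
sides of the indifference equation, `β · repGap 1 β + (1 - β) · repGap 0 β`, is strictly
increasing, negative at `β†_1` and positive at `β†_0`, and the intermediate value theorem
gives exactly one root.
-/

open intervalIntegral

theorem StrictMonoOn.existsUnique_eq_zero {g : ℝ → ℝ} {c d : ℝ} (hg : StrictMonoOn g (Icc c d))
    (hcont : ContinuousOn g (Icc c d)) (hcd : c ≤ d) (hc : g c < 0) (hd : 0 < g d) :
    ∃! x, x ∈ Ioo c d ∧ g x = 0 := by
  obtain ⟨x, hx, hgx⟩ := intermediate_value_Ioo hcd hcont ⟨hc, hd⟩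
  exact ⟨x, ⟨hx, hgx⟩, fun y ⟨hy, hgy⟩ =>
    hg.injOn (Ioo_subset_Icc_self hy) (Ioo_subset_Icc_self hx) (hgy.trans hgx.symm)⟩

theorem strictMonoOn_mul_add_one_sub_mul {A B : ℝ → ℝ} {c d : ℝ} (hc : 0 ≤ c) (hd : d ≤ 1)
    (hA : StrictMonoOn A (Icc c d)) (hB : StrictMonoOn B (Icc c d)) (hAc : A c = 0)
    (hBd : B d = 0) : StrictMonoOn (fun β => β * A β + (1 - β) * B β) (Icc c d) := by
  intro x hx y hy hxy
  have hAx : 0 ≤ A x := hAc ▸ hA.monotoneOn (left_mem_Icc.2 (hx.1.trans hx.2)) hx hx.1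
  have hBy : B y ≤ 0 := hBd ▸ hB.monotoneOn hy (right_mem_Icc.2 (hy.1.trans hy.2)) hy.2
  have h1 : x * A x ≤ y * A x := mul_le_mul_of_nonneg_right hxy.le hAx
  have h2 : y * A x < y * A y := mul_lt_mul_of_pos_left (hA hx hy hxy) (by linarith [hx.1])
  have h3 : (1 - x) * B x < (1 - x) * B y :=
    mul_lt_mul_of_pos_left (hB hx hy hxy) (by linarith [hy.2])
  have h4 : (1 - x) * B y ≤ (1 - y) * B y := mul_le_mul_of_nonpos_right (by linarith) hBy
  simp only
  linarith

theorem existsUnique_mul_add_one_sub_mul_eq_zero {A B : ℝ → ℝ} {c d : ℝ} (hc : 0 ≤ c)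
    (hd : d ≤ 1) (hcd : c < d) (hA : StrictMonoOn A (Icc c d)) (hB : StrictMonoOn B (Icc c d))
    (hAcont : ContinuousOn A (Icc c d)) (hBcont : ContinuousOn B (Icc c d)) (hAc : A c = 0)
    (hBd : B d = 0) : ∃! β, β ∈ Ioo c d ∧ β * A β + (1 - β) * B β = 0 := by
  have hc_mem : c ∈ Icc c d := left_mem_Icc.2 hcd.le
  have hd_mem : d ∈ Icc c d := right_mem_Icc.2 hcd.le
  have hBc : B c < 0 := hBd ▸ hB hc_mem hd_mem hcd
  have hAd : 0 < A d := hAc ▸ hA hc_mem hd_mem hcd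
  refine (strictMonoOn_mul_add_one_sub_mul hc hd hA hB hAc hBd).existsUnique_eq_zero
    (by fun_prop) hcd.le ?_ ?_
  · simp only [hAc]
    nlinarith
  · simp only [hBd]
    nlinarith

theorem strictMonoOn_div_of_hasDerivAt {N D n d : ℝ → ℝ} {a b : ℝ}
    (hN : ∀ x ∈ Ioo a b, HasDerivAt N (n x) x) (hD : ∀ x ∈ Ioo a b, HasDerivAt D (d x) x)
    (hDpos : ∀ x ∈ Ioo a b, 0 < D x) (hcross : ∀ x ∈ Ioo a b, d x * N x < n x * D x) :
    StrictMonoOn (fun x => N x / D x) (Ioo a b) := by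
  refine strictMonoOn_of_deriv_pos (convex_Ioo a b)
    (fun x hx => ((hN x hx).continuousAt.div (hD x hx).continuousAt
      (hDpos x hx).ne').continuousWithinAt) fun x hx => ?_
  rw [interior_Ioo] at hx
  have hderiv : HasDerivAt (fun x => N x / D x) ((n x * D x - N x * d x) / D x ^ 2) x :=
    (hN x hx).div (hD x hx) (hDpos x hx).ne'
  rw [hderiv.deriv]
  exact div_pos (by linarith [hcross x hx]) (pow_pos (hDpos x hx) 2)

theorem strictAntiOn_div_of_hasDerivAt {N D n d : ℝ → ℝ} {a b : ℝ}
    (hN : ∀ x ∈ Ioo a b, HasDerivAt N (n x) x) (hD : ∀ x ∈ Ioo a b, HasDerivAt D (d x) x)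
    (hDpos : ∀ x ∈ Ioo a b, 0 < D x) (hcross : ∀ x ∈ Ioo a b, n x * D x < d x * N x) :
    StrictAntiOn (fun x => N x / D x) (Ioo a b) := by
  intro x hx y hy hxy
  have := strictMonoOn_div_of_hasDerivAt (N := fun x => -N x) (n := fun x => -n x)
    (fun x hx => (hN x hx).neg) hD hDpos (fun x hx => by linarith [hcross x hx]) hx hy hxy
  simp only [neg_div] at this
  linarith

theorem setIntegral_pos_of_Ioo_subset {g : ℝ → ℝ} {S : Set ℝ} {c d : ℝ} (hS : MeasurableSet S)
    (hg : IntegrableOn g S) (hnonneg : ∀ x ∈ S, 0 ≤ g x) (hcd : c < d) (hsub : Ioo c d ⊆ S)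
    (hpos : ∀ x ∈ Ioo c d, 0 < g x) : 0 < ∫ x in S, g x := by
  rw [setIntegral_pos_iff_support_of_nonneg_ae (ae_restrict_of_forall_mem hS hnonneg) hg]
  calc (0 : ENNReal) < volume (Ioo c d) := by simp [hcd]
    _ ≤ volume (Function.support g ∩ S) :=
      measure_mono fun x hx => ⟨(hpos x hx).ne', hsub hx⟩

theorem EReal.exists_between_coe {x : ℝ} {b : EReal} (h : (x : EReal) < b) :
    ∃ c : ℝ, x < c ∧ (c : EReal) < b := by
  obtain ⟨c, hxc, hcb⟩ := exists_between h
  lift c to ℝ using ⟨hcb.ne_top, hxc.ne_bot⟩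
  exact ⟨c, EReal.coe_lt_coe_iff.1 hxc, hcb⟩

theorem Fs_eq_intervalIntegral (f : ℝ → ℝ) (s : Fin 2) (ℓ : ℝ) :
    Fs f s ℓ = ∫ u in (0 : ℝ)..ℓ, fs f s u := by
  fin_cases s <;> rfl

namespace IsLRExperiment

variable {f : ℝ → ℝ} {a : ℝ} {b : EReal}

theorem nonneg (hf : IsLRExperiment f a b) (x : ℝ) : 0 ≤ f x := by
  have hdense : Dense ({a} ∪ (fun y : ℝ => (y : EReal)) ⁻¹' {b})ᶜ :=
    ((countable_singleton a).union ((countable_singleton b).preimage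
      EReal.coe_injective)).dense_compl ℝ
  refine closure_minimal (fun y hy => ?_) (isClosed_le continuous_const hf.cont)
    (hdense.closure_eq ▸ mem_univ x)
  simp only [mem_compl_iff, mem_union, mem_singleton_iff, mem_preimage, not_or] at hy
  rcases lt_or_gt_of_ne hy.1 with hya | hay
  · exact (hf.zero_outside y (Or.inl hya)).ge
  rcases lt_or_gt_of_ne hy.2 with hyb | hby
  · exact (hf.pos y hay hyb).le
  · exact (hf.zero_outside y (Or.inr hby)).ge

theorem continuous_fs (hf : IsLRExperiment f a b) (s : Fin 2) : Continuous (fs f s) := by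
  fin_cases s
  · exact hf.cont
  · exact continuous_id.mul hf.cont

theorem fs_nonneg (hf : IsLRExperiment f a b) (s : Fin 2) {x : ℝ} (hx : 0 ≤ x) :
    0 ≤ fs f s x := by
  fin_cases s
  · exact hf.nonneg x
  · exact mul_nonneg hx (hf.nonneg x)

theorem fs_pos (hf : IsLRExperiment f a b) (s : Fin 2) {x : ℝ} (hax : a < x)
    (hxb : (x : EReal) < b) : 0 < fs f s x := by
  fin_cases s
  · exact hf.pos x hax hxb
  · exact mul_pos (hf.a_nonneg.trans_lt hax) (hf.pos x hax hxb)

theorem integral_fs (hf : IsLRExperiment f a b) (s : Fin 2) :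
    ∫ ℓ in Ioi (0 : ℝ), fs f s ℓ = 1 := by
  fin_cases s
  · exact hf.int_one
  · exact hf.int_mean

theorem integrableOn_fs (hf : IsLRExperiment f a b) (s : Fin 2) :
    IntegrableOn (fs f s) (Ioi 0) := by
  by_contra h
  simpa [integral_undef h] using hf.integral_fs s

theorem hasDerivAt_Fs (hf : IsLRExperiment f a b) (s : Fin 2) (ℓ : ℝ) :
    HasDerivAt (Fs f s) (fs f s ℓ) ℓ := by
  simpa only [funext (Fs_eq_intervalIntegral f s)] using
    ((hf.continuous_fs s).integral_hasStrictDerivAt 0 ℓ).hasDerivAt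

theorem continuous_Fs (hf : IsLRExperiment f a b) (s : Fin 2) : Continuous (Fs f s) :=
  continuous_iff_continuousAt.2 fun ℓ => (hf.hasDerivAt_Fs s ℓ).continuousAt

theorem one_sub_Fs (hf : IsLRExperiment f a b) (s : Fin 2) {ℓ : ℝ} (hℓ : 0 ≤ ℓ) :
    1 - Fs f s ℓ = ∫ u in Ioi ℓ, fs f s u := by
  have hint := hf.integrableOn_fs s
  rw [← hf.integral_fs s, ← Ioc_union_Ioi_eq_Ioi hℓ,
    setIntegral_union (Ioc_disjoint_Ioi le_rfl) measurableSet_Ioi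
      (hint.mono_set Ioc_subset_Ioi_self) (hint.mono_set (Ioi_subset_Ioi hℓ)),
    Fs_eq_intervalIntegral, integral_of_le hℓ]
  ring

theorem Fs_pos (hf : IsLRExperiment f a b) (s : Fin 2) {ℓ : ℝ} (hℓ : a < ℓ) :
    0 < Fs f s ℓ := by
  obtain ⟨d, had, hdb⟩ := EReal.exists_between_coe hf.a_lt_b
  rw [Fs_eq_intervalIntegral, integral_of_le (hf.a_nonneg.trans hℓ.le)]
  refine setIntegral_pos_of_Ioo_subset measurableSet_Ioc (hf.continuous_fs s).integrableOn_Ioc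
    (fun x hx => hf.fs_nonneg s hx.1.le) (lt_min hℓ had)
    (fun x hx => ⟨hf.a_nonneg.trans_lt hx.1, hx.2.le.trans (min_le_left _ _)⟩) fun x hx => ?_
  exact hf.fs_pos s hx.1
    ((EReal.coe_lt_coe_iff.2 (hx.2.trans_le (min_le_right _ _))).trans hdb)

theorem Fs_lt_one (hf : IsLRExperiment f a b) (s : Fin 2) {ℓ : ℝ} (hℓ0 : 0 ≤ ℓ)
    (hℓ : (ℓ : EReal) < b) : Fs f s ℓ < 1 := by
  have hmax : ((max a ℓ : ℝ) : EReal) < b := by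
    rcases max_cases a ℓ with ⟨h, _⟩ | ⟨h, _⟩ <;> rw [h]
    exacts [hf.a_lt_b, hℓ]
  obtain ⟨c, hc, hcb⟩ := EReal.exists_between_coe hmax
  rw [← sub_pos, hf.one_sub_Fs s hℓ0]
  refine setIntegral_pos_of_Ioo_subset measurableSet_Ioi
    ((hf.integrableOn_fs s).mono_set (Ioi_subset_Ioi hℓ0))
    (fun x hx => hf.fs_nonneg s (hℓ0.trans hx.le)) hc
    (fun x hx => (le_max_right a ℓ).trans_lt hx.1) fun x hx => ?_
  exact hf.fs_pos s ((le_max_left a ℓ).trans_lt hx.1) ((EReal.coe_lt_coe_iff.2 hx.2).trans hcb)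

theorem b_nonneg {b : ℝ} (hf : IsLRExperiment f a b) : 0 ≤ b :=
  hf.a_nonneg.trans (EReal.coe_lt_coe_iff.1 hf.a_lt_b).le

theorem Fs_mem_Ioo (hf : IsLRExperiment f a b) (s : Fin 2) {ℓ : ℝ} (hℓa : a < ℓ)
    (hℓb : (ℓ : EReal) < b) : Fs f s ℓ ∈ Ioo 0 1 :=
  ⟨hf.Fs_pos s hℓa, hf.Fs_lt_one s (hf.a_nonneg.trans hℓa.le) hℓb⟩

end IsLRExperiment

section Beliefs

variable {μ : ℝ}

theorem continuousOn_zOf (hμ : μ ≠ 0) : ContinuousOn (zOf μ) (Iio 1) :=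
  ContinuousOn.div (by fun_prop) (by fun_prop) fun β hβ =>
    mul_ne_zero hμ (sub_ne_zero.2 (ne_of_gt hβ))

theorem zOf_strictMonoOn (hμ0 : 0 < μ) (hμ1 : μ < 1) : StrictMonoOn (zOf μ) (Iio 1) := by
  intro x hx y hy hxy
  have hx' : 0 < 1 - x := sub_pos.2 hx
  have hy' : 0 < 1 - y := sub_pos.2 hy
  unfold zOf
  rw [div_lt_div_iff₀ (by positivity) (by positivity)]
  nlinarith [mul_pos (mul_pos hμ0 (sub_pos.2 hμ1)) (sub_pos.2 hxy)]

theorem betaOf_lt_one (hμ0 : 0 < μ) (hμ1 : μ < 1) {x : ℝ} (hx : 0 ≤ x) : betaOf μ x < 1 := by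
  unfold betaOf
  rw [div_lt_one (by nlinarith)]
  linarith

theorem zOf_betaOf (hμ0 : 0 < μ) (hμ1 : μ < 1) {x : ℝ} (hx : 0 ≤ x) :
    zOf μ (betaOf μ x) = x := by
  have hden : μ * x + 1 - μ ≠ 0 := by nlinarith
  have hμ' : 1 - μ ≠ 0 := sub_ne_zero.2 hμ1.ne'
  unfold zOf betaOf
  rw [one_sub_div hden, show μ * x + 1 - μ - μ * x = 1 - μ by ring]
  field_simp

theorem betaOf_lt_iff_lt_zOf (hμ0 : 0 < μ) (hμ1 : μ < 1) {x β : ℝ} (hx : 0 ≤ x) (hβ : β < 1) :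
    betaOf μ x < β ↔ x < zOf μ β := by
  rw [← (zOf_strictMonoOn hμ0 hμ1).lt_iff_lt (betaOf_lt_one hμ0 hμ1 hx) hβ,
    zOf_betaOf hμ0 hμ1 hx]

theorem lt_betaOf_iff_zOf_lt (hμ0 : 0 < μ) (hμ1 : μ < 1) {x β : ℝ} (hx : 0 ≤ x) (hβ : β < 1) :
    β < betaOf μ x ↔ zOf μ β < x := by
  rw [← (zOf_strictMonoOn hμ0 hμ1).lt_iff_lt hβ (betaOf_lt_one hμ0 hμ1 hx),
    zOf_betaOf hμ0 hμ1 hx]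

theorem zOf_mem_Ioo_of_mem_Ioo_betaOf (hμ0 : 0 < μ) (hμ1 : μ < 1) {x y β : ℝ} (hx : 0 ≤ x)
    (hy : 0 ≤ y) (hβ : β ∈ Ioo (betaOf μ x) (betaOf μ y)) : zOf μ β ∈ Ioo x y := by
  have hβ1 : β < 1 := hβ.2.trans (betaOf_lt_one hμ0 hμ1 hy)
  exact ⟨(betaOf_lt_iff_lt_zOf hμ0 hμ1 hx hβ1).1 hβ.1, (lt_betaOf_iff_zOf_lt hμ0 hμ1 hy hβ1).1 hβ.2⟩

theorem IsLRExperiment.continuousOn_H {f : ℝ → ℝ} {a : ℝ} {b : EReal}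
    (hf : IsLRExperiment f a b) (hμ : μ ≠ 0) (s : Fin 2) : ContinuousOn (H f μ s) (Iio 1) :=
  (hf.continuous_Fs s).comp_continuousOn (continuousOn_zOf hμ)

end Beliefs

/-- `p * repShare p x y` is the market's posterior that the sender is of the high type after a
report sent with probability `x` by the high type and `y` by the low type. -/
noncomputable def repShare (p x y : ℝ) : ℝ := x / (p * x + (1 - p) * y)

section RepShare

variable {p : ℝ}

theorem repShare_self {x : ℝ} (hx : x ≠ 0) : repShare p x x = 1 := by
  rw [repShare, ← add_mul, add_sub_cancel, one_mul, div_self hx]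

theorem repShare_denom_pos (hp : p ∈ Ioo 0 1) {x y : ℝ} (hx : 0 < x) (hy : 0 < y) :
    0 < p * x + (1 - p) * y :=
  add_pos (mul_pos hp.1 hx) (mul_pos (sub_pos.2 hp.2) hy)

theorem repShare_lt_repShare (hp : p ∈ Ioo 0 1) {x₁ y₁ x₂ y₂ : ℝ} (hx₁ : 0 < x₁) (hy₁ : 0 < y₁)
    (hx₂ : 0 < x₂) (hy₂ : 0 < y₂) (h : y₁ / x₁ < y₂ / x₂) :
    repShare p x₂ y₂ < repShare p x₁ y₁ := by
  rw [div_lt_div_iff₀ hx₁ hx₂] at h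
  rw [repShare, repShare, div_lt_div_iff₀ (repShare_denom_pos hp hx₂ hy₂)
    (repShare_denom_pos hp hx₁ hy₁)]
  nlinarith [sub_pos.2 hp.2]

end RepShare

/-- The gain in reputation (relative to the prior) from report 1 over report 0 in state `s`,
when the market conjectures the cutoff strategy with threshold `β`. -/
noncomputable def repGap (fh fl : ℝ → ℝ) (μ p : ℝ) (s : Fin 2) (β : ℝ) : ℝ :=
  repShare p (1 - H fh μ s β) (1 - H fl μ s β) - repShare p (H fh μ s β) (H fl μ s β)

theorem indiffLHS_sub_indiffRHS (fh fl : ℝ → ℝ) (μ p β : ℝ) :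
    indiffLHS fh fl μ p β - indiffRHS fh fl μ p β =
      β * repGap fh fl μ p 1 β + (1 - β) * repGap fh fl μ p 0 β := by
  unfold indiffLHS indiffRHS repGap repShare
  ring

section TwoTypes

variable {fh fl : ℝ → ℝ} {a_h a_l b_l : ℝ} {b_h : EReal}

theorem Fs_mem_Ioo_of_mem_Ioo (hh : IsLRExperiment fh a_h b_h)
    (hl : IsLRExperiment fl a_l b_l) (hab : a_h < a_l) (hbb : (b_l : EReal) < b_h) (s : Fin 2)
    {ℓ : ℝ} (hℓ : ℓ ∈ Ioo a_l b_l) : Fs fh s ℓ ∈ Ioo 0 1 ∧ Fs fl s ℓ ∈ Ioo 0 1 :=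
  have hℓb : (ℓ : EReal) < b_l := EReal.coe_lt_coe_iff.2 hℓ.2
  ⟨hh.Fs_mem_Ioo s (hab.trans hℓ.1) (hℓb.trans hbb), hl.Fs_mem_Ioo s hℓ.1 hℓb⟩

theorem Noisier.strictMonoOn_Fs_div (hdom : Noisier fh fl a_l b_l)
    (hh : IsLRExperiment fh a_h b_h) (hl : IsLRExperiment fl a_l b_l) (hab : a_h < a_l)
    (hbb : (b_l : EReal) < b_h) (s : Fin 2) :
    StrictMonoOn (fun ℓ => Fs fl s ℓ / Fs fh s ℓ) (Ioo a_l b_l) := by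
  refine strictMonoOn_div_of_hasDerivAt (fun ℓ _ => hl.hasDerivAt_Fs s ℓ)
    (fun ℓ _ => hh.hasDerivAt_Fs s ℓ)
    (fun ℓ hℓ => (Fs_mem_Ioo_of_mem_Ioo hh hl hab hbb s hℓ).1.1) fun ℓ hℓ => ?_
  obtain ⟨⟨hFh, -⟩, ⟨hFl, -⟩⟩ := Fs_mem_Ioo_of_mem_Ioo hh hl hab hbb s hℓ
  have hrev := (hdom s ℓ hℓ.1 hℓ.2).1
  rwa [gt_iff_lt, div_lt_div_iff₀ hFh hFl] at hrev

theorem Noisier.strictAntiOn_one_sub_Fs_div (hdom : Noisier fh fl a_l b_l)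
    (hh : IsLRExperiment fh a_h b_h) (hl : IsLRExperiment fl a_l b_l) (hab : a_h < a_l)
    (hbb : (b_l : EReal) < b_h) (s : Fin 2) :
    StrictAntiOn (fun ℓ => (1 - Fs fl s ℓ) / (1 - Fs fh s ℓ)) (Ioo a_l b_l) := by
  refine strictAntiOn_div_of_hasDerivAt (fun ℓ _ => (hl.hasDerivAt_Fs s ℓ).const_sub 1)
    (fun ℓ _ => (hh.hasDerivAt_Fs s ℓ).const_sub 1)
    (fun ℓ hℓ => sub_pos.2 (Fs_mem_Ioo_of_mem_Ioo hh hl hab hbb s hℓ).1.2) fun ℓ hℓ => ?_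
  obtain ⟨⟨-, hFh⟩, ⟨-, hFl⟩⟩ := Fs_mem_Ioo_of_mem_Ioo hh hl hab hbb s hℓ
  have hhaz := (hdom s ℓ hℓ.1 hℓ.2).2
  rw [gt_iff_lt, div_lt_div_iff₀ (sub_pos.2 hFh) (sub_pos.2 hFl)] at hhaz
  linarith

variable {μ p : ℝ}

theorem H_mem_Ioo (hh : IsLRExperiment fh a_h b_h) (hl : IsLRExperiment fl a_l b_l)
    (hab : a_h < a_l) (hbb : (b_l : EReal) < b_h) (hμ0 : 0 < μ) (hμ1 : μ < 1) (s : Fin 2)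
    {β : ℝ} (hβ : β ∈ Ioo (betaOf μ a_l) (betaOf μ b_l)) :
    H fh μ s β ∈ Ioo 0 1 ∧ H fl μ s β ∈ Ioo 0 1 :=
  Fs_mem_Ioo_of_mem_Ioo hh hl hab hbb s <| zOf_mem_Ioo_of_mem_Ioo_betaOf hμ0 hμ1
    hl.a_nonneg hl.b_nonneg hβ

theorem Noisier.strictMonoOn_repGap (hdom : Noisier fh fl a_l b_l)
    (hh : IsLRExperiment fh a_h b_h) (hl : IsLRExperiment fl a_l b_l) (hab : a_h < a_l)
    (hbb : (b_l : EReal) < b_h) (hμ0 : 0 < μ) (hμ1 : μ < 1) (hp : p ∈ Ioo 0 1) (s : Fin 2) :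
    StrictMonoOn (repGap fh fl μ p s) (Ioo (betaOf μ a_l) (betaOf μ b_l)) := by
  intro β₁ hβ₁ β₂ hβ₂ hβ
  have ha_l : 0 ≤ a_l := hl.a_nonneg
  have hb_l : 0 ≤ b_l := hl.b_nonneg
  have hz₁ := zOf_mem_Ioo_of_mem_Ioo_betaOf hμ0 hμ1 ha_l hb_l hβ₁
  have hz₂ := zOf_mem_Ioo_of_mem_Ioo_betaOf hμ0 hμ1 ha_l hb_l hβ₂
  have hz : zOf μ β₁ < zOf μ β₂ := zOf_strictMonoOn hμ0 hμ1
    (hβ₁.2.trans (betaOf_lt_one hμ0 hμ1 hb_l)) (hβ₂.2.trans (betaOf_lt_one hμ0 hμ1 hb_l)) hβ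
  obtain ⟨⟨hh₁, hh₁'⟩, ⟨hl₁, hl₁'⟩⟩ := H_mem_Ioo hh hl hab hbb hμ0 hμ1 s hβ₁
  obtain ⟨⟨hh₂, hh₂'⟩, ⟨hl₂, hl₂'⟩⟩ := H_mem_Ioo hh hl hab hbb hμ0 hμ1 s hβ₂
  have hreport0 : repShare p (H fh μ s β₂) (H fl μ s β₂) < repShare p (H fh μ s β₁) (H fl μ s β₁) :=
    repShare_lt_repShare hp hh₁ hl₁ hh₂ hl₂ (hdom.strictMonoOn_Fs_div hh hl hab hbb s hz₁ hz₂ hz)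
  have hreport1 : repShare p (1 - H fh μ s β₁) (1 - H fl μ s β₁) <
      repShare p (1 - H fh μ s β₂) (1 - H fl μ s β₂) :=
    repShare_lt_repShare hp (sub_pos.2 hh₂') (sub_pos.2 hl₂') (sub_pos.2 hh₁') (sub_pos.2 hl₁')
      (hdom.strictAntiOn_one_sub_Fs_div hh hl hab hbb s hz₁ hz₂ hz)
  unfold repGap
  linarith

theorem continuousOn_repGap (hh : IsLRExperiment fh a_h b_h) (hl : IsLRExperiment fl a_l b_l)
    (hab : a_h < a_l) (hbb : (b_l : EReal) < b_h) (hμ0 : 0 < μ) (hμ1 : μ < 1) (hp : p ∈ Ioo 0 1)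
    (s : Fin 2) : ContinuousOn (repGap fh fl μ p s) (Ioo (betaOf μ a_l) (betaOf μ b_l)) := by
  have hsub : Ioo (betaOf μ a_l) (betaOf μ b_l) ⊆ Iio 1 := fun β hβ =>
    hβ.2.trans (betaOf_lt_one hμ0 hμ1 hl.b_nonneg)
  have hHh := (hh.continuousOn_H hμ0.ne' s).mono hsub
  have hHl := (hl.continuousOn_H hμ0.ne' s).mono hsub
  unfold repGap repShare
  refine ContinuousOn.sub (ContinuousOn.div (by fun_prop) (by fun_prop) fun β hβ => ?_)
    (ContinuousOn.div hHh (by fun_prop) fun β hβ => ?_) <;>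
  obtain ⟨⟨hh₀, hh₁⟩, ⟨hl₀, hl₁⟩⟩ := H_mem_Ioo hh hl hab hbb hμ0 hμ1 s hβ
  · exact (repShare_denom_pos hp (sub_pos.2 hh₁) (sub_pos.2 hl₁)).ne'
  · exact (repShare_denom_pos hp hh₀ hl₀).ne'

theorem IsCrossingBelief.H_eq {s : Fin 2} {βd : ℝ}
    (hc : IsCrossingBelief fh fl a_h a_l b_l b_h μ s βd) (hh : IsLRExperiment fh a_h b_h)
    (hl : IsLRExperiment fl a_l b_l) (hab : a_h < a_l) (hbb : (b_l : EReal) < b_h)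
    (hμ0 : 0 < μ) (hμ1 : μ < 1) : H fh μ s βd = H fl μ s βd := by
  have hb_l : 0 ≤ b_l := hl.b_nonneg
  have hβ1 : βd < 1 := hc.1.2.trans (betaOf_lt_one hμ0 hμ1 hb_l)
  have hz := zOf_mem_Ioo_of_mem_Ioo_betaOf hμ0 hμ1 hl.a_nonneg hb_l hc.1
  have hzero := (hc.2 βd ((betaOf_lt_iff_lt_zOf hμ0 hμ1 hh.a_nonneg hβ1).2 (hab.trans hz.1)) hβ1
    ((EReal.coe_lt_coe_iff.2 hz.2).trans hbb)).2.1 rfl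
  linarith

theorem IsCrossingBelief.repGap_eq_zero {s : Fin 2} {βd : ℝ}
    (hc : IsCrossingBelief fh fl a_h a_l b_l b_h μ s βd) (hh : IsLRExperiment fh a_h b_h)
    (hl : IsLRExperiment fl a_l b_l) (hab : a_h < a_l) (hbb : (b_l : EReal) < b_h)
    (hμ0 : 0 < μ) (hμ1 : μ < 1) : repGap fh fl μ p s βd = 0 := by
  obtain ⟨⟨h₀, h₁⟩, -⟩ := H_mem_Ioo hh hl hab hbb hμ0 hμ1 s hc.1
  rw [repGap, ← hc.H_eq hh hl hab hbb hμ0 hμ1, repShare_self h₀.ne',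
    repShare_self (sub_pos.2 h₁).ne', sub_self]

end TwoTypes

/-- Existence and uniqueness of the informative-equilibrium belief cutoff: if the
crossing beliefs satisfy `β†_1 < β†_0`, the indifference equation has a unique solution
in `(β†_1, β†_0)`. -/
theorem stmt_4 (fh fl : ℝ → ℝ) (a_h a_l b_l : ℝ) (b_h : EReal)
    (hh : IsLRExperiment fh a_h b_h) (hl : IsLRExperiment fl a_l (b_l : EReal))
    (hab : a_h < a_l) (hbb : (b_l : EReal) < b_h)
    (hdom : Noisier fh fl a_l b_l)
    (μ : ℝ) (hμ : μ ∈ Set.Ico (1/2 : ℝ) 1)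
    (p : ℝ) (hp : p ∈ Set.Ioo (0:ℝ) 1)
    (βd0 βd1 : ℝ)
    (hc0 : IsCrossingBelief fh fl a_h a_l b_l b_h μ 0 βd0)
    (hc1 : IsCrossingBelief fh fl a_h a_l b_l b_h μ 1 βd1)
    (hlt : βd1 < βd0) :
    ∃! β : ℝ, β ∈ Set.Ioo βd1 βd0 ∧
      indiffLHS fh fl μ p β = indiffRHS fh fl μ p β := by
  obtain ⟨hμ_half, hμ1⟩ := hμ
  have hμ0 : 0 < μ := by linarith
  have hI : Icc βd1 βd0 ⊆ Ioo (betaOf μ a_l) (betaOf μ b_l) := Icc_subset_Ioo hc1.1.1 hc0.1.2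
  have hβd1 : 0 ≤ βd1 := by
    have : 0 ≤ betaOf μ a_l :=
      div_nonneg (mul_nonneg hμ0.le hl.a_nonneg) (by nlinarith [hl.a_nonneg])
    linarith [hc1.1.1]
  have hβd0 : βd0 ≤ 1 := (hc0.1.2.trans (betaOf_lt_one hμ0 hμ1 hl.b_nonneg)).le
  simp_rw [← sub_eq_zero (a := indiffLHS _ _ _ _ _), indiffLHS_sub_indiffRHS]
  exact existsUnique_mul_add_one_sub_mul_eq_zero hβd1 hβd0 hlt
    ((hdom.strictMonoOn_repGap hh hl hab hbb hμ0 hμ1 hp 1).mono hI)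
    ((hdom.strictMonoOn_repGap hh hl hab hbb hμ0 hμ1 hp 0).mono hI)
    ((continuousOn_repGap hh hl hab hbb hμ0 hμ1 hp 1).mono hI)
    ((continuousOn_repGap hh hl hab hbb hμ0 hμ1 hp 0).mono hI)
    (hc1.repGap_eq_zero hh hl hab hbb hμ0 hμ1) (hc0.repGap_eq_zero hh hl hab hbb hμ0 hμ1)
end

section
/- For each integer k ≥ 2, set b_k = k/(k² − k + 1) and f_k(ℓ) = (1−1/k)·k·e^{−kℓ} + (1/k)·b_k·e^{−b_k ℓ}, with state-0 CDF F_k(ℓ) = ∫₀^ℓ f_k(u) du and state-1 CDF T_k(ℓ) = ∫₀^ℓ u·f_k(u) du. Then for every ℓ > 0, lim_{k→∞} F_k(ℓ) = 1, and for every M > 0, lim_{k→∞} T_k(M) = 0. -/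
/-! `f_k` is the mixture, with weights `1 − 1/k` and `1/k`, of the exponential densities of rates
`k` and `b_k`, so `F_k` and `T_k` have closed forms. Below `ℓ` the fast component (rate `k`) has
mass `1 − e^{−kℓ} → 1` and partial mean at most `1/k → 0`; the slow component (rate `b_k`) only
has weight `1/k → 0`, while its mass and partial mean below `ℓ` stay bounded by `1` and `ℓ`. -/

open MeasureTheory Set

/-- The small exponential rate `b_k = k/(k² − k + 1)` of the hyperexponential
experiment. -/
noncomputable def bHE (k : ℕ) : ℝ := (k : ℝ) / ((k : ℝ)^2 - (k : ℝ) + 1)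

/-- State-0 density of the simple hyperexponential experiment of parameter `k`:
`f_k(ℓ) = (1 − 1/k)·k·e^{−kℓ} + (1/k)·b_k·e^{−b_k ℓ}`. -/
noncomputable def fHE (k : ℕ) (ℓ : ℝ) : ℝ :=
  (1 - 1/(k : ℝ)) * (k : ℝ) * Real.exp (-(k : ℝ) * ℓ)
    + (1/(k : ℝ)) * bHE k * Real.exp (-(bHE k) * ℓ)

/-- State-0 CDF of the hyperexponential experiment. -/
noncomputable def FHE (k : ℕ) (ℓ : ℝ) : ℝ := ∫ u in (0:ℝ)..ℓ, fHE k u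

/-- State-1 CDF of the hyperexponential experiment. -/
noncomputable def THE (k : ℕ) (ℓ : ℝ) : ℝ := ∫ u in (0:ℝ)..ℓ, u * fHE k u

open Real Filter Topology

lemma integral_mul_exp_neg_mul (a ℓ : ℝ) :
    ∫ u in (0:ℝ)..ℓ, a * exp (-(a * u)) = 1 - exp (-(a * ℓ)) := by
  have hderiv (u : ℝ) : HasDerivAt (fun u => -exp (-(a * u))) (a * exp (-(a * u))) u :=
    (((hasDerivAt_id' u).const_mul a).fun_neg.exp).fun_neg.congr_deriv (by ring)
  rw [intervalIntegral.integral_eq_sub_of_hasDerivAt (fun u _ => hderiv u)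
    ((by fun_prop : Continuous _).intervalIntegrable _ _)]
  simp only [mul_zero, neg_zero, exp_zero]
  ring

lemma integral_mul_mul_exp_neg_mul {a : ℝ} (ha : a ≠ 0) (M : ℝ) :
    ∫ u in (0:ℝ)..M, u * (a * exp (-(a * u)))
      = (1 - exp (-(a * M))) / a - M * exp (-(a * M)) := by
  have hderiv (u : ℝ) : HasDerivAt (fun u => -(u + a⁻¹) * exp (-(a * u)))
      (u * (a * exp (-(a * u)))) u := by
    refine (((hasDerivAt_id' u).add_const a⁻¹).fun_neg.fun_mul
      ((hasDerivAt_id' u).const_mul a).fun_neg.exp).congr_deriv ?_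
    field_simp
    ring
  rw [intervalIntegral.integral_eq_sub_of_hasDerivAt (fun u _ => hderiv u)
    ((by fun_prop : Continuous _).intervalIntegrable _ _)]
  simp only [mul_zero, neg_zero, exp_zero, zero_add, mul_one]
  field_simp
  ring

lemma bHE_nonneg (k : ℕ) : 0 ≤ bHE k := by
  unfold bHE
  apply div_nonneg <;> nlinarith [(Nat.cast_nonneg k : (0 : ℝ) ≤ k)]

lemma bHE_pos {k : ℕ} (hk : k ≠ 0) : 0 < bHE k := by
  have : (1 : ℝ) ≤ k := by exact_mod_cast Nat.one_le_iff_ne_zero.mpr hk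
  unfold bHE
  apply div_pos <;> nlinarith

lemma fHE_eq_mixture (k : ℕ) (u : ℝ) :
    fHE k u = (1 - 1 / (k : ℝ)) * (k * exp (-(k * u)))
      + 1 / (k : ℝ) * (bHE k * exp (-(bHE k * u))) := by
  simp only [fHE, neg_mul]
  ring

lemma FHE_eq (k : ℕ) (ℓ : ℝ) :
    FHE k ℓ = (1 - 1 / (k : ℝ)) * (1 - exp (-(k * ℓ)))
      + 1 / (k : ℝ) * (1 - exp (-(bHE k * ℓ))) := by
  simp only [FHE, fHE_eq_mixture]
  rw [intervalIntegral.integral_add, intervalIntegral.integral_const_mul (1 - 1 / (k : ℝ)),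
    intervalIntegral.integral_const_mul (1 / (k : ℝ)), integral_mul_exp_neg_mul,
    integral_mul_exp_neg_mul]
  all_goals exact (by fun_prop : Continuous _).intervalIntegrable _ _

lemma THE_eq {k : ℕ} (hk : k ≠ 0) (M : ℝ) :
    THE k M = (1 - 1 / (k : ℝ)) * ((1 - exp (-(k * M))) / k - M * exp (-(k * M)))
      + 1 / (k : ℝ) * ((1 - exp (-(bHE k * M))) / bHE k - M * exp (-(bHE k * M))) := by
  simp only [THE, fHE_eq_mixture, mul_add, mul_left_comm _ (1 - 1 / (k : ℝ)),
    mul_left_comm _ (1 / (k : ℝ))]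
  rw [intervalIntegral.integral_add, intervalIntegral.integral_const_mul (1 - 1 / (k : ℝ)),
    intervalIntegral.integral_const_mul (1 / (k : ℝ)),
    integral_mul_mul_exp_neg_mul (by exact_mod_cast hk),
    integral_mul_mul_exp_neg_mul (bHE_pos hk).ne']
  all_goals exact (by fun_prop : Continuous _).intervalIntegrable _ _

lemma abs_one_sub_exp_neg_le_one {x : ℝ} (hx : 0 ≤ x) : |1 - exp (-x)| ≤ 1 := by
  have : exp (-x) ≤ 1 := exp_le_one_iff.2 (by linarith)
  rw [abs_le]
  constructor <;> linarith [exp_pos (-x)]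

lemma abs_one_sub_exp_neg_mul_div_sub_le {a M : ℝ} (ha : 0 ≤ a) (hM : 0 ≤ M) :
    |(1 - exp (-(a * M))) / a - M * exp (-(a * M))| ≤ M := by
  have hexp_le_one : exp (-(a * M)) ≤ 1 := exp_le_one_iff.2 (by nlinarith)
  have hmass_nonneg : 0 ≤ (1 - exp (-(a * M))) / a := div_nonneg (by linarith) ha
  have hmass_le : (1 - exp (-(a * M))) / a ≤ M :=
    div_le_of_le_mul₀ ha hM (by linarith [add_one_le_exp (-(a * M))])
  have htail_nonneg : 0 ≤ M * exp (-(a * M)) := by positivity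
  have htail_le : M * exp (-(a * M)) ≤ M := mul_le_of_le_one_right hM hexp_le_one
  rw [abs_sub_le_iff]
  constructor <;> linarith

/-- Weak convergence of the hyperexponential experiment to the perfect experiment, in
pointwise-CDF form: in state 0 all mass concentrates near `0` (`F_k(ℓ) → 1` for every
`ℓ > 0`), and in state 1 all mass escapes beyond every finite threshold
(`T_k(M) → 0` for every `M > 0`). -/
theorem stmt_19 :
    (∀ ℓ : ℝ, 0 < ℓ →
      Filter.Tendsto (fun k : ℕ => FHE k ℓ) Filter.atTop (nhds 1)) ∧
    (∀ M : ℝ, 0 < M →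
      Filter.Tendsto (fun k : ℕ => THE k M) Filter.atTop (nhds 0)) := by
  have hone : Tendsto (fun _ : ℕ => (1 : ℝ)) atTop (𝓝 1) := tendsto_const_nhds
  have hinv : Tendsto (fun k : ℕ => 1 / (k : ℝ)) atTop (𝓝 0) :=
    tendsto_one_div_atTop_nhds_zero_nat
  have hexp {x : ℝ} (hx : 0 < x) : Tendsto (fun k : ℕ => exp (-(k * x))) atTop (𝓝 0) :=
    tendsto_exp_neg_atTop_nhds_zero.comp (tendsto_natCast_atTop_atTop.atTop_mul_const hx)
  refine ⟨fun ℓ hℓ => ?_, fun M hM => ?_⟩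
  · have hslow : Tendsto (fun k : ℕ => 1 / (k : ℝ) * (1 - exp (-(bHE k * ℓ)))) atTop (𝓝 0) :=
      hinv.zero_mul_isBoundedUnder_le <| isBoundedUnder_of
        ⟨1, fun k => abs_one_sub_exp_neg_le_one (mul_nonneg (bHE_nonneg k) hℓ.le)⟩
    simp only [FHE_eq]
    simpa using ((hone.sub hinv).mul (hone.sub (hexp hℓ))).add hslow
  · have hfast : Tendsto (fun k : ℕ => (1 - exp (-(k * M))) / k - M * exp (-(k * M)))
        atTop (𝓝 0) := by
      simpa [div_eq_mul_inv] using ((hone.sub (hexp hM)).mul hinv).sub ((hexp hM).const_mul M)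
    have hslow := hinv.zero_mul_isBoundedUnder_le <| isBoundedUnder_of
        ⟨M, fun k => abs_one_sub_exp_neg_mul_div_sub_le (bHE_nonneg k) hM.le⟩
    refine Tendsto.congr' ((eventually_ne_atTop 0).mono fun k hk => (THE_eq hk M).symm) ?_
    simpa using ((hone.sub hinv).mul hfast).add hslow
end
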